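/- arXiv:2201.11033 — 2 statements merged into one kernel-verified Lean document; each statement's English description precedes it below -/
import Mathlib

section
/- For every l ∈ ℤ, a word w in the free monoid on the alphabet A represents the element b·x_l of S if and only if w = a^k b x_l for some integer k ≥ 0 (where a^k b x_l denotes the word consisting of k letters a followed by the letters b and x_l). -/
/-- The alphabet of the monoid `S`: letters `a`, `b` and `x n`, `y n` for `n : ℤ`. -/
inductive SGen : Type
  | a : SGen
  | b : SGen
  | x : ℤ → SGen
  | y : ℤ → SGen

/-- The defining relations of `S`: `a·b·x n = b·x n` and `a·b·y n = b·y (n+1)` for `n ∈ ℤ`. -/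
inductive SRel : FreeMonoid SGen → FreeMonoid SGen → Prop
  | xr (n : ℤ) : SRel (.of .a * .of .b * .of (.x n)) (.of .b * .of (.x n))
  | yr (n : ℤ) : SRel (.of .a * .of .b * .of (.y n)) (.of .b * .of (.y (n + 1)))

/-- The monoid `S` presented by the generators `SGen` and the relations `SRel`. -/
abbrev S : Type := PresentedMonoid SRel

/-- The images of the generators in `S`. -/
def gen (g : SGen) : S := PresentedMonoid.of SRel g

/-- The principal right ideal `sS` of a monoid. -/
def rIdeal {M : Type*} [Monoid M] (s : M) : Set M := {m | ∃ u, m = s * u}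

/-!
The words `aᵏ b xₗ` form a union of congruence classes of the defining congruence of `S`,
because that congruence is contained in the syntactic congruence of this set of words:
inserting or deleting an `a` in front of a factor `b xₙ` does not change membership, and no
word of the set contains a letter `yₙ`. Conversely, `aᵏ b xₗ = b xₗ` in `S` by `k`
applications of the relation `a b xₗ = b xₗ`.
-/

namespace FreeMonoid

variable {α : Type*}

theorem mem_powers_of_iff {a : α} {u : FreeMonoid α} :
    u ∈ Submonoid.powers (of a) ↔ ∀ m ∈ u, m = a := by
  constructor
  · rintro ⟨k, rfl⟩ m hm
    induction k with
    | zero => exact absurd hm notMem_one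
    | succ k ih => exact (mem_mul.1 (pow_succ (of a) k ▸ hm)).elim ih mem_of.1
  · induction u using FreeMonoid.inductionOn' with
    | one => exact fun _ => one_mem _
    | of_mul m u ih =>
      intro h
      obtain rfl : m = a := h m (mem_mul.2 (.inl mem_of_self))
      exact mul_mem (Submonoid.mem_powers _) (ih fun n hn => h n (mem_mul.2 (.inr hn)))

theorem mul_mem_powers_of_iff {a : α} {u v : FreeMonoid α} :
    u * v ∈ Submonoid.powers (of a) ↔
      u ∈ Submonoid.powers (of a) ∧ v ∈ Submonoid.powers (of a) := by
  simp only [mem_powers_of_iff, mem_mul, or_imp, forall_and]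

theorem mul_of_mul_eq_mul_of_mul_iff {x₁ x₂ z₁ z₂ : FreeMonoid α} {a₁ a₂ : α}
    (hx : a₂ ∉ x₁) (hz : a₂ ∉ z₁) :
    x₁ * of a₁ * z₁ = x₂ * of a₂ * z₂ ↔ x₁ = x₂ ∧ a₁ = a₂ ∧ z₁ = z₂ := by
  rw [← toList.injective.eq_iff, ← toList.injective.eq_iff (a := x₁),
    ← toList.injective.eq_iff (a := z₁), ←
    List.append_cons_inj_of_notMem (x₁ := x₁.toList) (z₁ := z₁.toList) hx hz]
  simp only [toList_mul, toList_of, List.append_assoc, List.singleton_append]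

end FreeMonoid

def Con.syntactic {M : Type*} [Monoid M] (L : Set M) : Con M where
  r x y := ∀ u v, u * x * v ∈ L ↔ u * y * v ∈ L
  iseqv :=
    ⟨fun _ _ _ => Iff.rfl, fun h u v => (h u v).symm, fun h₁ h₂ u v => (h₁ u v).trans (h₂ u v)⟩
  mul' {x₁ x₂ y₁ y₂} hx hy u v := by
    simpa only [mul_assoc] using
      (hx u (y₁ * v)).trans (by simpa only [mul_assoc] using hy (u * x₂) v)

theorem Con.mem_iff_of_syntactic {M : Type*} [Monoid M] {L : Set M} {x y : M}
    (h : Con.syntactic L x y) : x ∈ L ↔ y ∈ L := by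
  simpa using h 1 1

open FreeMonoid

def bxWords (l : ℤ) : Set (FreeMonoid SGen) :=
  {w | ∃ k : ℕ, w = of SGen.a ^ k * of SGen.b * of (SGen.x l)}

theorem mul_bx_mul_mem_bxWords_iff {l n : ℤ} {u t : FreeMonoid SGen} :
    u * (of .b * of (.x n)) * t ∈ bxWords l ↔
      u ∈ Submonoid.powers (of .a) ∧ n = l ∧ t = 1 := by
  have hb (k : ℕ) : SGen.b ∉ of SGen.a ^ k := fun hk => by
    cases mem_powers_of_iff.1 ⟨k, rfl⟩ _ hk
  have hx : SGen.b ∉ of (SGen.x l) := by simp [mem_of]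
  have hxt : of (SGen.x l) = of (SGen.x n) * t ↔ n = l ∧ t = 1 := by
    rw [← toList.injective.eq_iff, toList_mul, toList_of, toList_of, List.singleton_append,
      List.cons_eq_cons, SGen.x.injEq, eq_comm (a := l), eq_comm (a := []), ← toList_one,
      toList.injective.eq_iff]
  have hsplit (k : ℕ) : u * of .b * (of (.x n) * t) = of .a ^ k * of .b * of (.x l) ↔
      of .a ^ k = u ∧ n = l ∧ t = 1 := by
    rw [eq_comm, mul_of_mul_eq_mul_of_mul_iff (hb k) hx, hxt, and_iff_right rfl]
  rw [show u * (of .b * of (.x n)) * t = u * of .b * (of (.x n) * t) by simp only [mul_assoc]]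
  simp only [bxWords, Set.mem_ofPred_eq, Submonoid.mem_powers_iff, hsplit, exists_and_right]

theorem y_notMem_of_mem_bxWords {l m : ℤ} {w : FreeMonoid SGen} (hw : w ∈ bxWords l) :
    SGen.y m ∉ w := by
  obtain ⟨k, rfl⟩ := hw
  simp only [mem_mul, mem_of, reduceCtorEq, or_false]
  exact fun h => by cases mem_powers_of_iff.1 ⟨k, rfl⟩ _ h

theorem conGen_le_syntactic_bxWords (l : ℤ) : conGen SRel ≤ Con.syntactic (bxWords l) := by
  rw [Con.conGen_le]
  rintro _ _ (n | n) u t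
  · rw [show u * (of .a * of .b * of (.x n)) * t = u * of .a * (of .b * of (.x n)) * t by
      simp only [mul_assoc], mul_bx_mul_mem_bxWords_iff, mul_bx_mul_mem_bxWords_iff,
      mul_mem_powers_of_iff, and_iff_left (Submonoid.mem_powers _)]
  · exact iff_of_false (fun h => y_notMem_of_mem_bxWords (m := n) h (by simp [mem_mul, mem_of]))
      (fun h => y_notMem_of_mem_bxWords (m := n + 1) h (by simp [mem_mul, mem_of]))

theorem gen_a_mul_gen_b_mul_gen_x (n : ℤ) :
    gen .a * (gen .b * gen (.x n)) = gen .b * gen (.x n) := by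
  rw [← mul_assoc]
  exact PresentedMonoid.mk_eq_mk_of_rel (SRel.xr n)

theorem gen_a_pow_mul_gen_b_mul_gen_x (k : ℕ) (n : ℤ) :
    gen .a ^ k * (gen .b * gen (.x n)) = gen .b * gen (.x n) := by
  induction k with
  | zero => exact one_mul _
  | succ k ih => rw [pow_succ, mul_assoc, gen_a_mul_gen_b_mul_gen_x, ih]

/-- A word `w` in the free monoid on the alphabet represents `b·xₗ` in `S` if and only if
`w = aᵏ b xₗ` for some `k ≥ 0`. -/
theorem S_words_for_bx (l : ℤ) (w : FreeMonoid SGen) :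
    PresentedMonoid.mk SRel w = gen .b * gen (.x l) ↔
      ∃ k : ℕ, w = FreeMonoid.of SGen.a ^ k * FreeMonoid.of SGen.b * FreeMonoid.of (SGen.x l) := by
  have hbx : gen .b * gen (.x l) = PresentedMonoid.mk SRel (of .b * of (.x l)) := rfl
  constructor
  · intro h
    rw [hbx, PresentedMonoid.mk_eq_mk_iff] at h
    exact (Con.mem_iff_of_syntactic (conGen_le_syntactic_bxWords l h)).2
      ⟨0, by rw [pow_zero, one_mul]⟩
  · rintro ⟨k, rfl⟩
    rw [map_mul, map_mul, map_pow, mul_assoc]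
    exact gen_a_pow_mul_gen_b_mul_gen_x k l
end

section
/- The monoid S is strongly C*-regular. -/
/-- The constructible right ideals of a monoid `M`: the smallest family of subsets of `M`
containing `M` itself and closed under the operations `X ↦ tX` and `X ↦ t⁻¹X = {m | t·m ∈ X}`
for every `t ∈ M`. -/
inductive IsConstructible (M : Type*) [Monoid M] : Set M → Prop
  | univ : IsConstructible M Set.univ
  | mul (t : M) {X : Set M} : IsConstructible M X → IsConstructible M ((t * ·) '' X)
  | preimage (t : M) {X : Set M} : IsConstructible M X → IsConstructible M {m | t * m ∈ X}

/-- We encode partial bijections of a monoid `M` by their graphs, i.e. subsets of `M × M`.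
`InLeftHull M G` says that the partial map with graph `G` belongs to the left inverse hull
`I_ℓ(M)` of `M`: the smallest collection of partial bijections of `M` containing the left
translations `m ↦ s·m` (with domain all of `M`) for every `s ∈ M` and closed under taking
inverses and compositions. -/
inductive InLeftHull (M : Type*) [Monoid M] : Set (M × M) → Prop
  | translation (s : M) : InLeftHull M {p | p.2 = s * p.1}
  | inv {G : Set (M × M)} : InLeftHull M G → InLeftHull M {p | (p.2, p.1) ∈ G}
  | comp {G H : Set (M × M)} : InLeftHull M G → InLeftHull M H →
      InLeftHull M {p | ∃ z, (p.1, z) ∈ G ∧ (z, p.2) ∈ H}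

/-- The domain of a partial map encoded by its graph. -/
def pDom {M : Type*} (G : Set (M × M)) : Set M := {m | ∃ y, (m, y) ∈ G}

/-- A left cancellative monoid `M` is *strongly C*-regular* if whenever
`h 0, …, h (n-1) ∈ I_ℓ(M)` and constructible right ideals `X, Xs 0, …, Xs (m-1) ∈ 𝒥(M)` satisfy
`∅ ≠ X \ (Xs 0 ∪ ⋯ ∪ Xs (m-1)) ⊆ ⋃ₖ {s | s ∈ dom (h k), (h k) s = s}`, there are constructible
right ideals `Y 0, …, Y (l-1) ∈ 𝒥(M)` and indices `kj 0, …, kj (l-1)` such that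
`X \ (Xs 0 ∪ ⋯ ∪ Xs (m-1)) ⊆ Y 0 ∪ ⋯ ∪ Y (l-1)` and, for each `j`, `Y j ⊆ dom (h (kj j))` and
`h (kj j)` fixes every point of `Y j`.  (Note that `(s, s) ∈ G` says exactly that `s` lies in
the domain of the partial map with graph `G` and is fixed by it.) -/
def StronglyCstarRegular (M : Type*) [Monoid M] : Prop :=
  ∀ (n : ℕ) (h : Fin n → Set (M × M)) (m : ℕ) (X : Set M) (Xs : Fin m → Set M),
    (∀ k, InLeftHull M (h k)) →
    IsConstructible M X → (∀ i, IsConstructible M (Xs i)) →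
    (X \ ⋃ i, Xs i).Nonempty →
    (X \ ⋃ i, Xs i) ⊆ (⋃ k, {s : M | (s, s) ∈ h k}) →
    ∃ (l : ℕ) (Y : Fin l → Set M) (kj : Fin l → Fin n),
      (∀ j, IsConstructible M (Y j)) ∧
      (X \ ⋃ i, Xs i) ⊆ (⋃ j, Y j) ∧
      ∀ j, Y j ⊆ {s : M | (s, s) ∈ h (kj j)}


/-!
Normal forms in `S` are the words without a factor `a b x n` or `a b y n`: left multiplication by
`a` fixes `b x n …` and turns `b y n …` into `b y (n+1) …`. Writing `C` (`S.branchIdeal`) for the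
right ideal of elements whose normal form starts with some `x n` or `y n`, the constructible right
ideals of `S` are `∅`, the principal ideals `v S` and the cones `v C`.

Every element of `I_ℓ(S)` commutes with right translations. So if `X = v S`, the generator `v`
lies in `X \ ⋃ Xᵢ`, is fixed by some `h k`, and then all of `X` is. If `X = v C`, the key point is
that an element of `I_ℓ(S)` fixing two of the points `v y n` fixes all of `v C`: it is a composite
of maps `s u ↦ t u`, and each of these either carries a cone `p C` onto a cone `q C`, shifting the
`y`-indices, or meets at most one of the points `p y n`. Applied to the identities of the
constructible ideals `Xᵢ`, this leaves infinitely many `v y n` in `X \ ⋃ Xᵢ`, and two of them are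
fixed by the same `h k`.
-/

section LeftHull

variable {M : Type*} [Monoid M]

theorem IsConstructible.mul_mem {Z : Set M} (hZ : IsConstructible M Z) {m : M} (hm : m ∈ Z)
    (u : M) : m * u ∈ Z := by
  induction hZ generalizing m with
  | univ => trivial
  | mul t _ ih =>
    obtain ⟨z, hz, rfl⟩ := hm
    exact ⟨z * u, ih hz, (mul_assoc ..).symm⟩
  | preimage t _ ih =>
    have := ih (m := t * m) hm
    rwa [mul_assoc] at this

theorem InLeftHull.mul_mem {G : Set (M × M)} (hG : InLeftHull M G) {m w : M} (h : (m, w) ∈ G)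
    (u : M) : (m * u, w * u) ∈ G := by
  induction hG generalizing m w with
  | translation s =>
    change w * u = s * (m * u)
    rw [show w = s * m from h, mul_assoc]
  | inv _ ih => exact ih h
  | comp _ _ ih₁ ih₂ =>
    obtain ⟨z, h₁, h₂⟩ := h
    exact ⟨z * u, ih₁ h₁, ih₂ h₂⟩

theorem IsConstructible.inLeftHull_diag [IsLeftCancelMul M] {Z : Set M}
    (hZ : IsConstructible M Z) : InLeftHull M {p | p.1 ∈ Z ∧ p.1 = p.2} := by
  induction hZ with
  | univ =>
    convert InLeftHull.translation (1 : M) using 1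
    ext p
    simp [eq_comm]
  | mul t _ ih =>
    convert (InLeftHull.translation t).inv.comp (ih.comp (InLeftHull.translation t)) using 1
    ext ⟨p₁, p₂⟩
    simp only [Set.mem_ofPred_eq, Set.mem_image]
    constructor
    · rintro ⟨⟨z, hz, rfl⟩, rfl⟩
      exact ⟨z, rfl, z, ⟨hz, rfl⟩, rfl⟩
    · rintro ⟨z, rfl, _, ⟨hz, rfl⟩, rfl⟩
      exact ⟨⟨z, hz, rfl⟩, rfl⟩
  | preimage t _ ih =>
    convert (InLeftHull.translation t).comp (ih.comp (InLeftHull.translation t).inv) using 1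
    ext ⟨p₁, p₂⟩
    simp only [Set.mem_ofPred_eq]
    constructor
    · rintro ⟨hp, rfl⟩
      exact ⟨t * p₁, rfl, t * p₁, ⟨hp, rfl⟩, rfl⟩
    · rintro ⟨_, rfl, _, ⟨hp, rfl⟩, h⟩
      exact ⟨hp, mul_left_cancel h⟩

/-- The composite of the partial maps `s₁ u ↦ t₁ u`, `s₂ u ↦ t₂ u`, … for `L = [(s₁, t₁), …]`. -/
def chain : List (M × M) → Set (M × M)
  | [] => {p | p.1 = p.2}
  | st :: L => {p | ∃ u, p.1 = st.1 * u ∧ (st.2 * u, p.2) ∈ chain L}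

theorem mem_chain_append (L₁ L₂ : List (M × M)) (p : M × M) :
    p ∈ chain (L₁ ++ L₂) ↔ ∃ z, (p.1, z) ∈ chain L₁ ∧ (z, p.2) ∈ chain L₂ := by
  induction L₁ generalizing p with
  | nil => simp [chain]
  | cons st L₁ ih =>
    constructor
    · rintro ⟨u, hu, h⟩
      obtain ⟨z, hz, h⟩ := (ih _).1 h
      exact ⟨z, ⟨u, hu, hz⟩, h⟩
    · rintro ⟨z, ⟨u, hu, hz⟩, h⟩
      exact ⟨u, hu, (ih _).2 ⟨z, hz, h⟩⟩

theorem mem_chain_reverse_swap (L : List (M × M)) (p : M × M) :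
    p ∈ chain (L.reverse.map Prod.swap) ↔ p.swap ∈ chain L := by
  induction L generalizing p with
  | nil => exact eq_comm
  | cons st L ih =>
    simp only [List.reverse_cons, List.map_append, mem_chain_append, ih]
    constructor
    · rintro ⟨z, hz, u, hu, h⟩
      exact ⟨u, (h : st.1 * u = p.2).symm, hu ▸ hz⟩
    · rintro ⟨u, hu, h⟩
      exact ⟨st.2 * u, h, u, rfl, hu.symm⟩

theorem InLeftHull.exists_eq_chain {G : Set (M × M)} (hG : InLeftHull M G) :
    ∃ L, G = chain L := by
  induction hG with
  | translation s => exact ⟨[(1, s)], by ext p; simp [chain, eq_comm]⟩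
  | inv _ ih =>
    obtain ⟨L, rfl⟩ := ih
    exact ⟨L.reverse.map Prod.swap, Set.ext fun p => (mem_chain_reverse_swap L p).symm⟩
  | comp _ _ ih₁ ih₂ =>
    obtain ⟨L₁, rfl⟩ := ih₁
    obtain ⟨L₂, rfl⟩ := ih₂
    exact ⟨L₁ ++ L₂, Set.ext fun p => (mem_chain_append L₁ L₂ p).symm⟩

theorem chain_functional [IsLeftCancelMul M] {L : List (M × M)} {m w₁ w₂ : M}
    (h₁ : (m, w₁) ∈ chain L) (h₂ : (m, w₂) ∈ chain L) : w₁ = w₂ := by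
  induction L generalizing m with
  | nil => exact (h₁ : m = w₁).symm.trans h₂
  | cons st L ih =>
    obtain ⟨u₁, hu₁, h₁⟩ := h₁
    obtain ⟨u₂, hu₂, h₂⟩ := h₂
    obtain rfl := mul_left_cancel (hu₁.symm.trans hu₂)
    exact ih h₁ h₂

end LeftHull

namespace S

def IsBranch : SGen → Prop
  | .x _ | .y _ => True
  | _ => False

theorem isBranch_y (n : ℤ) : IsBranch (.y n) := trivial

def shift (k : ℤ) : SGen → SGen
  | .y n => .y (n + k)
  | g => g

@[simp] theorem shift_shift (k l : ℤ) (g : SGen) : shift k (shift l g) = shift (l + k) g := by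
  cases g <;> simp [shift, add_assoc]

@[simp] theorem shift_zero (g : SGen) : shift 0 g = g := by
  cases g <;> simp [shift]

@[simp] theorem isBranch_shift (k : ℤ) (g : SGen) : IsBranch (shift k g) ↔ IsBranch g := by
  cases g <;> simp [shift, IsBranch]

theorem IsBranch.shift {z : SGen} (hz : IsBranch z) (k : ℤ) : IsBranch (S.shift k z) :=
  (isBranch_shift k z).2 hz

theorem shift_injective (k : ℤ) : Function.Injective (shift k) := fun g g' h => by
  simpa using congrArg (shift (-k)) h

/-- Left multiplication by a generator on normal forms. -/
def step : SGen → List SGen → List SGen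
  | .a, .b :: .x n :: t => .b :: .x n :: t
  | .a, .b :: .y n :: t => .b :: .y (n + 1) :: t
  | g, l => g :: l

theorem step_of_ne {g : SGen} (hg : g ≠ .a) (l : List SGen) : step g l = g :: l := by
  cases g <;> first | rfl | exact absurd rfl hg

theorem step_cases (g : SGen) (l : List SGen) :
    step g l = g :: l ∨
      g = .a ∧ ∃ z t, IsBranch z ∧ l = .b :: z :: t ∧ step g l = .b :: shift 1 z :: t := by
  rcases l with _ | ⟨_ | _ | _ | _, _ | ⟨_ | _ | _ | _, t⟩⟩ <;> cases g <;>
    simp [step, shift, IsBranch]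

theorem step_injective (g : SGen) : Function.Injective (step g) := by
  intro l l' h
  rcases step_cases g l with hl | ⟨hg, z, t, -, rfl, hl⟩ <;>
    rcases step_cases g l' with hl' | ⟨hg', z', t', -, rfl, hl'⟩ <;>
    rw [hl, hl'] at h <;> simp_all [(shift_injective 1).eq_iff]

theorem step_append {g c : SGen} {l : List SGen} (h : g ≠ .a ∨ l ≠ [.b] ∨ ¬IsBranch c) :
    step g (l ++ [c]) = step g l ++ [c] := by
  rcases l with _ | ⟨_ | _ | _ | _, _ | ⟨_ | _ | _ | _, t⟩⟩ <;> cases g <;> cases c <;>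
    simp_all [step, IsBranch]

def act : S →* Function.End (List SGen) :=
  PresentedMonoid.lift (M := Function.End (List SGen)) step (by rintro _ _ (_ | _) <;> rfl)

theorem act_mul_apply (s t : S) (l : List SGen) : act (s * t) l = act s (act t l) := by
  rw [map_mul]
  rfl

@[simp] theorem act_one_apply (l : List SGen) : act 1 l = l := by
  rw [map_one]
  rfl

@[simp] theorem act_gen (g : SGen) : act (gen g) = step g := rfl

def nf (s : S) : List SGen := act s []

theorem nf_mul (s t : S) : nf (s * t) = act s (nf t) :=
  act_mul_apply s t []

theorem nf_gen_mul (g : SGen) (s : S) : nf (gen g * s) = step g (nf s) :=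
  nf_mul (gen g) s

@[simp] theorem nf_one : nf 1 = [] :=
  act_one_apply []

def ofWord (l : List SGen) : S := (l.map gen).prod

@[simp] theorem ofWord_nil : ofWord [] = 1 := rfl

@[simp] theorem ofWord_cons (g : SGen) (l : List SGen) : ofWord (g :: l) = gen g * ofWord l :=
  List.prod_cons

theorem ofWord_append (l l' : List SGen) : ofWord (l ++ l') = ofWord l * ofWord l' := by
  simp [ofWord]

theorem gen_a_mul_gen_b_mul {z : SGen} (hz : IsBranch z) (u : S) :
    gen .a * (gen .b * (gen z * u)) = gen .b * (gen (shift 1 z) * u) := by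
  have key : gen .a * (gen .b * gen z) = gen .b * gen (shift 1 z) := by
    cases z <;> simp only [IsBranch] at hz
    · simpa [gen, PresentedMonoid.of, ← map_mul, mul_assoc, shift] using
        PresentedMonoid.mk_eq_mk_of_rel (SRel.xr _)
    · simpa [gen, PresentedMonoid.of, ← map_mul, mul_assoc, shift] using
        PresentedMonoid.mk_eq_mk_of_rel (SRel.yr _)
  simp only [← mul_assoc] at key ⊢
  rw [key]

theorem ofWord_step (g : SGen) (l : List SGen) : ofWord (step g l) = gen g * ofWord l := by
  rcases step_cases g l with h | ⟨rfl, z, t, hz, rfl, h⟩ <;> rw [h]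
  · rfl
  · simp [gen_a_mul_gen_b_mul hz]

theorem induction_on_gen {P : S → Prop} (s : S) (one : P 1)
    (gen_mul : ∀ g s, P s → P (gen g * s)) : P s :=
  Submonoid.induction_of_closure_eq_top_left (PresentedMonoid.closure_range_of SRel) s one
    (by rintro _ ⟨g, rfl⟩ s hs; exact gen_mul g s hs)

@[simp] theorem ofWord_nf (s : S) : ofWord (nf s) = s := by
  induction s using induction_on_gen with
  | one => rw [nf_one, ofWord_nil]
  | gen_mul g s ih => rw [nf_gen_mul, ofWord_step, ih]

theorem nf_injective : Function.Injective nf :=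
  Function.LeftInverse.injective ofWord_nf

theorem act_injective (s : S) : Function.Injective (act s) := by
  induction s using induction_on_gen with
  | one => exact fun l l' h => by simpa using h
  | gen_mul g s ih =>
    intro l l' h
    rw [act_mul_apply, act_mul_apply, act_gen] at h
    exact ih (step_injective g h)

instance : IsLeftCancelMul S where
  mul_left_cancel s u v h := nf_injective <| act_injective s <| by
    rw [← nf_mul, ← nf_mul]
    exact congrArg nf h


@[simp] theorem nf_gen (g : SGen) : nf (gen g) = [g] := by
  rw [← mul_one (gen g), nf_gen_mul, nf_one]
  cases g <;> rfl

theorem gen_mul_eq_gen_mul {g g' : SGen} {m m' : S} (h : gen g * m = gen g' * m') :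
    g = g' ∨ g = .a ∧ g' = .b ∨ g = .b ∧ g' = .a := by
  have h := congrArg nf h
  rw [nf_gen_mul, nf_gen_mul] at h
  rcases step_cases g (nf m) with h₁ | ⟨hg, _, _, _, _, h₁⟩ <;>
    rcases step_cases g' (nf m') with h₂ | ⟨hg', _, _, _, _, h₂⟩ <;>
    rw [h₁, h₂] at h <;> simp_all

theorem IsBranch.gen_mul_eq_gen_mul_iff {z g : SGen} (hz : IsBranch z) {u m : S} :
    gen z * u = gen g * m ↔ z = g ∧ u = m := by
  refine ⟨fun h => ?_, fun ⟨hg, hu⟩ => hg ▸ hu ▸ rfl⟩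
  obtain rfl : z = g := by
    rcases gen_mul_eq_gen_mul h with h' | ⟨rfl, -⟩ | ⟨rfl, -⟩
    exacts [h', hz.elim, hz.elim]
  exact ⟨rfl, mul_left_cancel h⟩

theorem gen_a_mul_eq_gen_b_mul_iff {m w : S} :
    gen .a * m = gen .b * w ↔
      ∃ z u, IsBranch z ∧ m = gen .b * (gen z * u) ∧ w = gen (shift 1 z) * u := by
  refine ⟨fun h => ?_, fun ⟨z, u, hz, hm, hw⟩ => hm ▸ hw ▸ gen_a_mul_gen_b_mul hz u⟩
  have h := congrArg nf h
  rw [nf_gen_mul, nf_gen_mul, step_of_ne (g := .b) (by simp)] at h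
  rcases step_cases .a (nf m) with h' | ⟨-, z, t, hz, hm, h'⟩
  · rw [h'] at h
    simp at h
  · rw [h'] at h
    refine ⟨z, ofWord t, hz, by rw [← ofWord_nf m, hm]; simp, ?_⟩
    rw [← ofWord_nf w, ← (List.cons.inj h).2]
    simp

theorem nf_mul_gen {c : SGen} (hc : ¬IsBranch c) (s : S) : nf (s * gen c) = nf s ++ [c] := by
  induction s using induction_on_gen with
  | one => simp
  | gen_mul g s ih => rw [mul_assoc, nf_gen_mul, nf_gen_mul, ih, step_append (by tauto)]

theorem eq_one_or_eq_mul_gen (u : S) : u = 1 ∨ ∃ v c, u = v * gen c := by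
  rcases (nf u).eq_nil_or_concat' with h | ⟨l, c, h⟩
  · exact .inl (by rw [← ofWord_nf u, h, ofWord_nil])
  · exact .inr ⟨ofWord l, c, by rw [← ofWord_nf u, h, ofWord_append]; simp⟩

/-- The normal form of `p` does not end in `a b`, so a branch letter appended to it stays
untouched. -/
def IsReduced (p : S) : Prop := ∀ z, IsBranch z → nf (p * gen z) = nf p ++ [z]

/-- The cones `s · branchIdeal` and `p · branchIdeal` coincide, up to shifting `y`-indices by
`d`. -/
def ConeShift (s p : S) (d : ℤ) : Prop := ∀ z, IsBranch z → s * gen z = p * gen (shift d z)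

theorem IsReduced.mul_gen_inj {p q : S} (hp : IsReduced p) (hq : IsReduced q) {z z' : SGen}
    (hz : IsBranch z) (hz' : IsBranch z') (h : p * gen z = q * gen z') : p = q ∧ z = z' := by
  have h := congrArg nf h
  rw [hp z hz, hq z' hz'] at h
  obtain ⟨hpq, hzz⟩ := List.append_inj' h rfl
  exact ⟨nf_injective hpq, List.singleton_inj.1 hzz⟩

theorem exists_coneShift (s : S) : ∃ p d, IsReduced p ∧ ConeShift s p d := by
  induction s using induction_on_gen with
  | one => exact ⟨1, 0, fun z _ => by simp, fun z _ => by simp⟩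
  | gen_mul g s ih =>
    obtain ⟨p, d, hp, hs⟩ := ih
    by_cases hgp : g = .a ∧ nf p = [.b]
    · obtain ⟨rfl, hb⟩ := hgp
      obtain rfl : p = gen .b := by rw [← ofWord_nf p, hb]; simp
      refine ⟨gen .b, d + 1, fun z _ => by simp [nf_gen_mul, step_of_ne], fun z hz => ?_⟩
      have := gen_a_mul_gen_b_mul (hz.shift d) 1
      simp only [mul_one, shift_shift] at this
      rw [mul_assoc, hs z hz, this, add_comm]
    · refine ⟨gen g * p, d, fun z hz => ?_, fun z hz => by rw [mul_assoc, hs z hz, mul_assoc]⟩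
      rw [mul_assoc, nf_gen_mul, nf_gen_mul, hp z hz, step_append (by tauto)]

theorem eq_one_or_coneShift_of_mul_eq {s u p : S} (hp : IsReduced p) {z : SGen}
    (hz : IsBranch z) (h : s * u = p * gen z) :
    u = 1 ∨ ∃ v c d, u = v * gen c ∧ ConeShift (s * v) p d := by
  refine (eq_one_or_eq_mul_gen u).imp id ?_
  rintro ⟨v, c, rfl⟩
  rw [← mul_assoc] at h
  by_cases hc : IsBranch c
  · obtain ⟨q, d, hq, hsv⟩ := exists_coneShift (s * v)
    rw [hsv c hc] at h
    obtain ⟨rfl, -⟩ := hq.mul_gen_inj hp (hc.shift d) hz h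
    exact ⟨v, c, d, rfl, hsv⟩
  · have h := congrArg nf h
    rw [nf_mul_gen hc, hp z hz] at h
    obtain rfl := List.singleton_inj.1 (List.append_inj' h rfl).2
    exact absurd hz hc


def branchIdeal : Set S := {m | ∃ z u, IsBranch z ∧ m = gen z * u}

/-- By `eq_one_or_coneShift_of_mul_eq`, the first map `s u ↦ t u` of the chain either meets at
most one point `p y n`, or carries the whole cone `p · branchIdeal` onto a cone. -/
theorem chain_cone_dichotomy (L : List (S × S)) {p : S} (hp : IsReduced p) :
    (∃ q σ, IsReduced q ∧ ∀ z, IsBranch z → (p * gen z, q * gen (shift σ z)) ∈ chain L) ∨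
      {n : ℤ | ∃ w, (p * gen (.y n), w) ∈ chain L}.Subsingleton := by
  induction L generalizing p with
  | nil => exact .inl ⟨p, 0, hp, fun z _ => by simp [chain]⟩
  | cons st L ih =>
    obtain ⟨s, t⟩ := st
    by_cases hdom : ∃ n u, s * u = p * gen (.y n)
    swap
    · exact .inr fun n₁ ⟨_, u, h, _⟩ => absurd ⟨n₁, u, h.symm⟩ hdom
    obtain ⟨n₀, u₀, h₀⟩ := hdom
    rcases eq_one_or_coneShift_of_mul_eq hp (isBranch_y n₀) h₀ with rfl | ⟨v, -, d, -, hv⟩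
    · have key : ∀ n u, p * gen (.y n) = s * u → n = n₀ := fun n u h => by
        rw [← mul_one s, h₀, mul_assoc, mul_right_inj, ← mul_one (gen (.y n)),
          (isBranch_y n).gen_mul_eq_gen_mul_iff] at h
        exact SGen.y.inj h.1
      exact .inr fun n₁ ⟨_, u₁, h₁, _⟩ n₂ ⟨_, u₂, h₂, _⟩ => (key n₁ u₁ h₁).trans (key n₂ u₂ h₂).symm
    have hs : ∀ z, IsBranch z → p * gen z = s * (v * gen (shift (-d) z)) := fun z hz => by
      rw [← mul_assoc, hv _ (hz.shift _)]
      simp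
    obtain ⟨q', d', hq', ht⟩ := exists_coneShift (t * v)
    rcases ih hq' with ⟨q, σ, hq, hL⟩ | hsub
    · refine .inl ⟨q, -d + d' + σ, hq, fun z hz => ⟨_, hs z hz, ?_⟩⟩
      have hz' := hz.shift (-d)
      rw [← mul_assoc, ht _ hz']
      simpa using hL _ (hz'.shift d')
    · have hreach : ∀ {n u w}, p * gen (.y n) = s * u → (t * u, w) ∈ chain L →
          n - d + d' ∈ {n | ∃ w, (q' * gen (.y n), w) ∈ chain L} := by
        intro n u w h hc
        rw [hs _ (isBranch_y n), mul_right_inj] at h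
        rw [← h, ← mul_assoc, ht _ ((isBranch_y n).shift _)] at hc
        exact ⟨w, by simpa [shift, sub_eq_add_neg] using hc⟩
      refine .inr ?_
      rintro n₁ ⟨w₁, u₁, h₁, hc₁⟩ n₂ ⟨w₂, u₂, h₂, hc₂⟩
      have := hsub (hreach h₁ hc₁) (hreach h₂ hc₂)
      omega

theorem image_branchIdeal_subset_fixed {G : Set (S × S)} (hG : InLeftHull S G) (v : S)
    {n₁ n₂ : ℤ} (hne : n₁ ≠ n₂) (h₁ : (v * gen (.y n₁), v * gen (.y n₁)) ∈ G)
    (h₂ : (v * gen (.y n₂), v * gen (.y n₂)) ∈ G) :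
    (v * ·) '' branchIdeal ⊆ {m | (m, m) ∈ G} := by
  obtain ⟨L, rfl⟩ := hG.exists_eq_chain
  obtain ⟨p, d, hp, hv⟩ := exists_coneShift v
  rw [hv _ (isBranch_y _)] at h₁ h₂
  rcases chain_cone_dichotomy L hp with ⟨q, σ, hq, hL⟩ | hsub
  · have hqp := chain_functional (hL _ (isBranch_y _)) h₁
    obtain ⟨rfl, hσ⟩ := hq.mul_gen_inj hp ((isBranch_y _).shift _) ((isBranch_y _).shift _) hqp
    obtain rfl : σ = 0 := by simpa [shift] using hσ
    rintro _ ⟨_, ⟨z, u, hz, rfl⟩, rfl⟩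
    change (v * (gen z * u), v * (gen z * u)) ∈ chain L
    have := hG.mul_mem (hL _ (hz.shift d)) u
    simpa only [shift_zero, ← hv z hz, mul_assoc] using this
  · exact absurd (hsub ⟨_, h₁⟩ ⟨_, h₂⟩) (by simpa [shift] using hne)

theorem subsingleton_y_mem_of_isConstructible {Z : Set S} (hZ : IsConstructible S Z) {v : S}
    (hvZ : ¬(v * ·) '' branchIdeal ⊆ Z) : {n : ℤ | v * gen (.y n) ∈ Z}.Subsingleton := by
  intro n₁ h₁ n₂ h₂
  by_contra hne
  exact hvZ fun m hm =>
    (image_branchIdeal_subset_fixed hZ.inLeftHull_diag v hne ⟨h₁, rfl⟩ ⟨h₂, rfl⟩ hm).1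

theorem image_mul_mul (a b : S) (T : Set S) : ((a * b) * ·) '' T = (a * ·) '' ((b * ·) '' T) := by
  simp only [Set.image_image, mul_assoc]

def IsStandard (Z : Set S) : Prop :=
  Z = ∅ ∨ ∃ v T, (T = Set.univ ∨ T = branchIdeal) ∧ Z = (v * ·) '' T

theorem IsStandard.image {Z : Set S} (hZ : IsStandard Z) (t : S) :
    IsStandard ((t * ·) '' Z) := by
  rcases hZ with rfl | ⟨v, T, hT, rfl⟩
  · exact .inl (Set.image_empty _)
  · exact .inr ⟨t * v, T, hT, (image_mul_mul t v T).symm⟩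

def twist (k : ℤ) (W : Set S) : Set S :=
  {m | ∃ z u, IsBranch z ∧ gen z * u ∈ W ∧ m = gen (shift k z) * u}

theorem twist_of_branchIdeal_subset (k : ℤ) {T : Set S} (hT : branchIdeal ⊆ T) :
    twist k T = branchIdeal := by
  ext m
  constructor
  · rintro ⟨z, u, hz, -, rfl⟩
    exact ⟨_, u, hz.shift k, rfl⟩
  · rintro ⟨z, u, hz, rfl⟩
    refine ⟨shift (-k) z, u, hz.shift _, hT ⟨_, u, hz.shift _, rfl⟩, ?_⟩
    simp

theorem twist_image_gen_mul (k : ℤ) {g : SGen} (hg : IsBranch g) (W : Set S) :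
    twist k ((gen g * ·) '' W) = (gen (shift k g) * ·) '' W := by
  ext m
  constructor
  · rintro ⟨z, u, hz, ⟨w, hw, h⟩, rfl⟩
    obtain ⟨rfl, rfl⟩ := hz.gen_mul_eq_gen_mul_iff.1 h.symm
    exact ⟨u, hw, rfl⟩
  · rintro ⟨w, hw, rfl⟩
    exact ⟨g, w, hg, ⟨w, hw, rfl⟩, rfl⟩

theorem twist_image_gen_mul_of_not_isBranch (k : ℤ) {g : SGen} (hg : ¬IsBranch g) (W : Set S) :
    twist k ((gen g * ·) '' W) = ∅ :=
  Set.eq_empty_of_forall_notMem fun _ ⟨_, _, hz, ⟨_, _, h⟩, _⟩ =>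
    hg ((hz.gen_mul_eq_gen_mul_iff.1 h.symm).1 ▸ hz)

theorem IsStandard.twist {W : Set S} (hW : IsStandard W) (k : ℤ) : IsStandard (twist k W) := by
  rcases hW with rfl | ⟨v, T, hT, rfl⟩
  · exact .inl (Set.eq_empty_of_forall_notMem fun _ ⟨_, _, _, h, _⟩ => h)
  rw [← ofWord_nf v]
  rcases nf v with _ | ⟨g, l⟩
  · refine .inr ⟨1, branchIdeal, .inr rfl, ?_⟩
    simp only [ofWord_nil, one_mul, Set.image_id']
    refine twist_of_branchIdeal_subset k ?_
    rcases hT with rfl | rfl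
    exacts [Set.subset_univ _, subset_rfl]
  rw [ofWord_cons, image_mul_mul]
  by_cases hg : IsBranch g
  · rw [twist_image_gen_mul k hg]
    exact .inr ⟨_, T, hT, (image_mul_mul _ _ T).symm⟩
  · exact .inl (twist_image_gen_mul_of_not_isBranch k hg _)

theorem preimage_gen_b_image_gen_a (W : Set S) :
    (gen .b * ·) ⁻¹' ((gen .a * ·) '' W) = twist 1 ((gen .b * ·) ⁻¹' W) := by
  ext m
  constructor
  · rintro ⟨w, hw, h⟩
    obtain ⟨z, u, hz, rfl, rfl⟩ := gen_a_mul_eq_gen_b_mul_iff.1 h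
    exact ⟨z, u, hz, hw, rfl⟩
  · rintro ⟨z, u, hz, hw, rfl⟩
    exact ⟨_, hw, gen_a_mul_gen_b_mul hz u⟩

theorem preimage_gen_a_image_gen_b (W : Set S) :
    (gen .a * ·) ⁻¹' ((gen .b * ·) '' W) = (gen .b * ·) '' twist (-1) W := by
  ext m
  constructor
  · rintro ⟨w, hw, h⟩
    obtain ⟨z, u, hz, rfl, rfl⟩ := gen_a_mul_eq_gen_b_mul_iff.1 h.symm
    exact ⟨gen z * u, ⟨_, u, hz.shift 1, hw, by simp⟩, rfl⟩
  · rintro ⟨_, ⟨z, u, hz, hw, rfl⟩, rfl⟩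
    refine ⟨_, hw, Eq.trans ?_ (gen_a_mul_gen_b_mul (hz.shift (-1)) u).symm⟩
    simp

theorem preimage_gen_mul_image_gen_mul_eq_empty {g g₀ : SGen} (h : g ≠ g₀)
    (hab : ¬(g = .a ∧ g₀ = .b)) (hba : ¬(g = .b ∧ g₀ = .a)) (W : Set S) :
    (gen g * ·) ⁻¹' ((gen g₀ * ·) '' W) = ∅ :=
  Set.eq_empty_of_forall_notMem fun _ ⟨_, _, hw⟩ => by
    rcases gen_mul_eq_gen_mul hw with h' | ⟨rfl, rfl⟩ | ⟨rfl, rfl⟩ <;> simp_all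

theorem isStandard_preimage_gen_mul_branchIdeal (g : SGen) :
    IsStandard ((gen g * ·) ⁻¹' branchIdeal) := by
  by_cases hg : IsBranch g
  · refine .inr ⟨1, Set.univ, .inl rfl, ?_⟩
    ext m
    simp only [Set.mem_preimage, one_mul, Set.image_id', Set.mem_univ, iff_true]
    exact ⟨g, m, hg, rfl⟩
  · exact .inl (Set.eq_empty_of_forall_notMem fun _ ⟨_, _, hz, h⟩ =>
      hg ((hz.gen_mul_eq_gen_mul_iff.1 h.symm).1 ▸ hz))

theorem isStandard_preimage_gen_mul_image_ofWord {T : Set S} (hT : T = Set.univ ∨ T = branchIdeal)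
    (l : List SGen) (g : SGen) : IsStandard ((gen g * ·) ⁻¹' ((ofWord l * ·) '' T)) := by
  induction l generalizing g with
  | nil =>
    simp only [ofWord_nil, one_mul, Set.image_id']
    rcases hT with rfl | rfl
    · exact .inr ⟨1, Set.univ, .inl rfl, by simp⟩
    · exact isStandard_preimage_gen_mul_branchIdeal g
  | cons g₀ l ih =>
    rw [ofWord_cons, image_mul_mul]
    have hW : IsStandard ((ofWord l * ·) '' T) := .inr ⟨_, T, hT, rfl⟩
    by_cases h : g = g₀
    · rwa [h, Set.preimage_image_eq _ (mul_right_injective _)]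
    by_cases hba : g = .b ∧ g₀ = .a
    · obtain ⟨rfl, rfl⟩ := hba
      rw [preimage_gen_b_image_gen_a]
      exact (ih .b).twist 1
    by_cases hab : g = .a ∧ g₀ = .b
    · obtain ⟨rfl, rfl⟩ := hab
      rw [preimage_gen_a_image_gen_b]
      exact (hW.twist (-1)).image _
    · exact .inl (preimage_gen_mul_image_gen_mul_eq_empty h hab hba _)

theorem IsStandard.preimage_mul {Z : Set S} (hZ : IsStandard Z) (t : S) :
    IsStandard ((t * ·) ⁻¹' Z) := by
  induction t using induction_on_gen generalizing Z with
  | one => simpa using hZ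
  | gen_mul g t ih =>
    rw [show ((gen g * t) * ·) ⁻¹' Z = (t * ·) ⁻¹' ((gen g * ·) ⁻¹' Z) by
      ext; simp [mul_assoc]]
    refine ih ?_
    rcases hZ with rfl | ⟨v, T, hT, rfl⟩
    · exact .inl Set.preimage_empty
    · rw [← ofWord_nf v]
      exact isStandard_preimage_gen_mul_image_ofWord hT _ g

theorem isStandard_of_isConstructible {Z : Set S} (hZ : IsConstructible S Z) : IsStandard Z := by
  induction hZ with
  | univ => exact .inr ⟨1, Set.univ, .inl rfl, by simp⟩
  | mul t _ ih => exact ih.image t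
  | preimage t _ ih => exact ih.preimage_mul t

theorem infinite_setOf_y_notMem_iUnion {ι : Type*} [Finite ι] {Xs : ι → Set S}
    (hXs : ∀ i, IsConstructible S (Xs i)) {v d : S} (hdv : d ∈ (v * ·) '' branchIdeal)
    (hd : d ∉ ⋃ i, Xs i) : {n : ℤ | v * gen (.y n) ∉ ⋃ i, Xs i}.Infinite := by
  have hfin : (⋃ i, {n : ℤ | v * gen (.y n) ∈ Xs i}).Finite :=
    Set.finite_iUnion fun i => (subsingleton_y_mem_of_isConstructible (hXs i)
      fun hsub => hd (Set.mem_iUnion.2 ⟨i, hsub hdv⟩)).finite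
  exact hfin.infinite_compl.mono fun n hn => by simpa using hn

theorem exists_image_branchIdeal_subset_fixed {ι : Type*} [Finite ι] {G : ι → Set (S × S)}
    (hG : ∀ k, InLeftHull S (G k)) {v : S} {N : Set ℤ} (hN : N.Infinite)
    (hcov : ∀ n ∈ N, ∃ k, (v * gen (.y n), v * gen (.y n)) ∈ G k) :
    ∃ k, (v * ·) '' branchIdeal ⊆ {m | (m, m) ∈ G k} := by
  by_contra! hno
  have hsub : ∀ k, {n : ℤ | (v * gen (.y n), v * gen (.y n)) ∈ G k}.Subsingleton :=
    fun k n₁ h₁ n₂ h₂ => by_contra fun hne =>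
      hno k (image_branchIdeal_subset_fixed (hG k) v hne h₁ h₂)
  refine hN ((Set.finite_iUnion fun k => (hsub k).finite).subset fun n hn => ?_)
  exact Set.mem_iUnion.2 (hcov n hn)

end S

/-- The monoid `S` is strongly C*-regular. -/
theorem S_stronglyCstarRegular : StronglyCstarRegular S := by
  intro n h m X Xs hh hX hXs ⟨d, hdX, hd⟩ hcov
  suffices ∃ k, X ⊆ {s | (s, s) ∈ h k} by
    obtain ⟨k, hk⟩ := this
    exact ⟨1, fun _ => X, fun _ => k, fun _ => hX, fun s hs => Set.mem_iUnion.2 ⟨0, hs.1⟩,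
      fun _ => hk⟩
  rcases S.isStandard_of_isConstructible hX with rfl | ⟨v, T, rfl | rfl, rfl⟩
  · exact absurd hdX (Set.notMem_empty d)
  · have hv : v ∉ ⋃ i, Xs i := fun hv => by
      obtain ⟨i, hi⟩ := Set.mem_iUnion.1 hv
      obtain ⟨u, -, rfl⟩ := hdX
      exact hd (Set.mem_iUnion.2 ⟨i, (hXs i).mul_mem hi u⟩)
    obtain ⟨k, hk⟩ := Set.mem_iUnion.1 (hcov ⟨⟨1, trivial, mul_one v⟩, hv⟩)
    exact ⟨k, by rintro _ ⟨u, -, rfl⟩; exact (hh k).mul_mem hk u⟩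
  · refine S.exists_image_branchIdeal_subset_fixed hh
      (S.infinite_setOf_y_notMem_iUnion hXs hdX hd) fun n hn => ?_
    have hvy : v * gen (.y n) ∈ (v * ·) '' S.branchIdeal :=
      ⟨_, ⟨.y n, 1, S.isBranch_y n, (mul_one _).symm⟩, rfl⟩
    obtain ⟨k, hk⟩ := Set.mem_iUnion.1 (hcov ⟨hvy, hn⟩)
    exact ⟨k, hk⟩
end
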